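/- Let w be a word in the Farey binary tree with value p/q and final pair (a/b, c/d), so that the unreduced degree sequence of p/q is A ⊕ B where A = [a_1,…,a_{b+1}] and B = [b_1,…,b_{d+1}] are the unreduced degree sequences of a/b and c/d. Then the degree of the merging node, namely the entry a_{b+1} + b_1 at position b+1 of A ⊕ B, is strictly smaller than the boundary degree k_1 + k_{q+1} of G_{p/q}. -/

import Mathlib

/-- Symbols for paths in the Farey binary tree. -/
inductive LR
  | L
  | R
deriving DecidableEq

/-- One step in the Farey binary tree: update the current pair of fractions
(represented as pairs (numerator, denominator) of naturals). -/
def fareyStep : ((ℕ × ℕ) × (ℕ × ℕ)) → LR → ((ℕ × ℕ) × (ℕ × ℕ))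
  | ((a, b), (c, d)), LR.L => ((a, b), (a + c, b + d))
  | ((a, b), (c, d)), LR.R => ((a + c, b + d), (c, d))

/-- The final pair of fractions of a word: after reading the first symbol `L`
the current pair is (0/1, 1/1); the remaining symbols update it. -/
def finalPair (w : List LR) : (ℕ × ℕ) × (ℕ × ℕ) :=
  w.tail.foldl fareyStep ((0, 1), (1, 1))

/-- The value ⟨w⟩ of a word: the mediant of its final pair, as (numerator, denominator). -/
def value (w : List LR) : ℕ × ℕ :=
  ((finalPair w).1.1 + (finalPair w).2.1, (finalPair w).1.2 + (finalPair w).2.2)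

/-- A word over {L,R} is a Farey word when its first symbol is `L`. -/
def IsFareyWord (w : List LR) : Prop := w.head? = some LR.L

/-- Concatenation of degree sequences:
[a₁,…,a_s] ⊕ [b₁,…,b_t] = [a₁+1, a₂, …, a_{s−1}, a_s+b₁, b₂, …, b_{t−1}, b_t+1]. -/
def oplus (A B : List ℕ) : List ℕ :=
  (A.dropLast.modifyHead (· + 1)) ++ [A.getLastD 0 + B.headD 0] ++ B.tail.dropLast
    ++ [B.getLastD 0 + 1]

/-- Update of the pair (D(left ancestor), D(right ancestor)) of unreduced degree
sequences along one symbol. -/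
def degStep : (List ℕ × List ℕ) → LR → (List ℕ × List ℕ)
  | (A, B), LR.L => (A, oplus A B)
  | (A, B), LR.R => (oplus A B, B)

/-- The pair (D(a/b), D(c/d)) of unreduced degree sequences of the final pair of a word;
0/1 and 1/1 are both assigned the list [1,1]. -/
def degPair (w : List LR) : List ℕ × List ℕ :=
  w.tail.foldl degStep ([1, 1], [1, 1])

/-- The unreduced degree sequence D(⟨w⟩) = D(a/b) ⊕ D(c/d) of the value of a word. -/
def Dseq (w : List LR) : List ℕ :=
  oplus (degPair w).1 (degPair w).2

/-- Reduction: [k₁,…,k_{q+1}] becomes [k₂,…,k_q, k₁+k_{q+1}]; the last entry is the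
boundary degree and the remaining ones are the inner degrees. -/
def reduce (D : List ℕ) : List ℕ :=
  D.tail.dropLast ++ [D.headD 0 + D.getLastD 0]

/-- The reduced degree sequence of the Haros graph G_{⟨w⟩}. -/
def degSeq (w : List LR) : List ℕ := reduce (Dseq w)

/-- Degree-distribution entropy S of the Haros graph G_{⟨w⟩}:
S = −Σ_k P(k)·ln P(k), summed over the degree values occurring in the reduced
degree sequence, where P(k) = m(k)/q. -/
noncomputable def Sent (w : List LR) : ℝ :=
  -∑ k ∈ (degSeq w).toFinset,
    (((degSeq w).count k : ℝ) / ((value w).2 : ℝ)) *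
      Real.log (((degSeq w).count k : ℝ) / ((value w).2 : ℝ))

/-- Reduced entropy H of the Haros graph G_{⟨w⟩} (with the convention 0·ln 0 = 0,
automatic since Real.log 0 = 0). -/
noncomputable def Hent (w : List LR) : ℝ :=
  let x : ℝ := ((value w).1 : ℝ) / ((value w).2 : ℝ)
  if x ≤ 1 / 2 then
    Sent w + 2 * x * Real.log x + (1 - 2 * x) * Real.log (1 - 2 * x)
  else
    Sent w + 2 * (1 - x) * Real.log (1 - x) + (2 * x - 1) * Real.log (2 * x - 1)


/-!
Since `A ⊕ B` starts with `A.head + 1` and ends with `B.last + 1`, the claim says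
`A.last + B.head ≤ A.head + B.last + 1` for the final pair `(A, B)`. This inequality,
together with `A.last ≤ B.last + 1` and `B.head ≤ A.head + 1`, holds for `([1,1], [1,1])`
and is preserved when either side is replaced by `A ⊕ B`: each of the three inequalities for
the new pair follows from one of the three for the old pair.
-/

structure DegPairInvariant (A B : List ℕ) : Prop where
  two_le_length_left : 2 ≤ A.length
  two_le_length_right : 2 ≤ B.length
  merge_le : A.getLastD 0 + B.headD 0 ≤ A.headD 0 + B.getLastD 0 + 1
  getLastD_left_le : A.getLastD 0 ≤ B.getLastD 0 + 1
  headD_right_le : B.headD 0 ≤ A.headD 0 + 1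

lemma two_le_length_oplus (A B : List ℕ) : 2 ≤ (oplus A B).length := by
  simp only [oplus, List.length_append, List.length_singleton]
  omega

lemma headD_oplus {A : List ℕ} (B : List ℕ) (hA : 2 ≤ A.length) :
    (oplus A B).headD 0 = A.headD 0 + 1 := by
  match A, hA with
  | _ :: _ :: _, _ => simp [oplus]

lemma getLastD_oplus (A B : List ℕ) : (oplus A B).getLastD 0 = B.getLastD 0 + 1 := by
  rw [oplus, List.getLastD_concat]

namespace DegPairInvariant

lemma degStep {A B : List ℕ} (h : DegPairInvariant A B) (s : LR) :
    DegPairInvariant (degStep (A, B) s).1 (degStep (A, B) s).2 := by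
  have hhead := headD_oplus B h.two_le_length_left
  have hlast := getLastD_oplus A B
  have := h.merge_le
  have := h.getLastD_left_le
  have := h.headD_right_le
  cases s with
  | L =>
    refine ⟨h.two_le_length_left, two_le_length_oplus A B, ?_, ?_, ?_⟩ <;>
      simp only [_root_.degStep, hhead, hlast] <;> omega
  | R =>
    refine ⟨two_le_length_oplus A B, h.two_le_length_right, ?_, ?_, ?_⟩ <;>
      simp only [_root_.degStep, hhead, hlast] <;> omega

lemma foldl_degStep (l : List LR) {p : List ℕ × List ℕ} (h : DegPairInvariant p.1 p.2) :
    DegPairInvariant (l.foldl _root_.degStep p).1 (l.foldl _root_.degStep p).2 := by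
  induction l generalizing p with
  | nil => exact h
  | cons s l ih => exact ih (h.degStep s)

lemma merge_lt_boundary {A B : List ℕ} (h : DegPairInvariant A B) :
    A.getLastD 0 + B.headD 0 < (oplus A B).headD 0 + (oplus A B).getLastD 0 := by
  rw [headD_oplus B h.two_le_length_left, getLastD_oplus]
  have := h.merge_le
  omega

end DegPairInvariant

lemma degPairInvariant_degPair (w : List LR) :
    DegPairInvariant (degPair w).1 (degPair w).2 :=
  DegPairInvariant.foldl_degStep w.tail ⟨le_rfl, le_rfl, by simp, by simp, by simp⟩

theorem statement5_general (w : List LR) :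
    (degPair w).1.getLastD 0 + (degPair w).2.headD 0
      < (Dseq w).headD 0 + (Dseq w).getLastD 0 :=
  (degPairInvariant_degPair w).merge_lt_boundary

/-- the degree of the merging node (the entry a_{b+1} + b₁ of A ⊕ B, where
A and B are the unreduced degree sequences of the final pair of w) is strictly smaller
than the boundary degree k₁ + k_{q+1} of G_{⟨w⟩}. -/
theorem statement5 (w : List LR) (hw : IsFareyWord w) :
    (degPair w).1.getLastD 0 + (degPair w).2.headD 0
      < (Dseq w).headD 0 + (Dseq w).getLastD 0 :=
  statement5_general w
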